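/- Let $I : \mathcal{M}_1(S^1) \to [0,\infty]$ be defined by $I(\mu) = \frac12 \int_{S^1} |\phi'(\zeta)|^2\,d\zeta$ if $\mu = \phi^2(\zeta)\,d\zeta$ with $\phi$ absolutely continuous (i.e. $\phi = \sqrt{d\mu/d\zeta} \in W^{1,2}(S^1)$), and $I(\mu) = \infty$ otherwise. Then $I$ is convex: for probability measures $\mu, \nu$ on $S^1$ and $\lambda \in [0,1]$, $I(\lambda\mu + (1-\lambda)\nu) \le \lambda I(\mu) + (1-\lambda) I(\nu)$. -/

import Mathlib

open Real MeasureTheory ENNReal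

/-- `φ` is the (nonnegative, absolutely continuous) square root of the density of `μ`
with respect to arclength measure on the circle, identified with `[0, 2π)`, and `ψ` is
its (square-integrable) derivative. -/
def IsSqrtDensity (μ : Measure ℝ) (φ ψ : ℝ → ℝ) : Prop :=
  Function.Periodic φ (2 * Real.pi) ∧ Function.Periodic ψ (2 * Real.pi) ∧
  (∀ x, 0 ≤ φ x) ∧
  (∀ x : ℝ, φ x = φ 0 + ∫ y in (0:ℝ)..x, ψ y) ∧
  IntervalIntegrable ψ volume 0 (2 * Real.pi) ∧
  IntervalIntegrable (fun x => (ψ x) ^ 2) volume 0 (2 * Real.pi) ∧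
  μ = (volume.restrict (Set.Ioc (0:ℝ) (2 * Real.pi))).withDensity
        (fun x => ENNReal.ofReal ((φ x) ^ 2))

/-- The Donsker–Varadhan rate function `I(μ) = ½ ∫ |φ'|²` if `μ = φ² dζ` with
`φ = √(dμ/dζ)` absolutely continuous in `W^{1,2}`, and `∞` otherwise. -/
noncomputable def rateI (μ : Measure ℝ) : ℝ≥0∞ :=
  sInf {E : ℝ≥0∞ | ∃ φ ψ : ℝ → ℝ, IsSqrtDensity μ φ ψ ∧
    E = ENNReal.ofReal ((1 / 2) * ∫ x in (0:ℝ)..(2 * Real.pi), (ψ x) ^ 2)}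

/-!
Write `Φ = √λ φ + i √(1 - λ) χ : ℂ`. The density of the mixture is `λ φ² + (1 - λ) χ² = ‖Φ‖²`,
so its square root is `σ = ‖Φ‖`. Since `|σ x - σ y| ≤ ‖Φ x - Φ y‖ ≤ |∫_y^x ‖Φ'‖|`, the function
`σ` is absolutely continuous with `|σ'| ≤ ‖Φ'‖` almost everywhere, and
`‖Φ'‖² = λ ψ² + (1 - λ) ω²` integrates to the convex combination of the two energies.
-/

open Set Filter Topology

theorem AbsolutelyContinuousOnInterval.of_dist_le {X Y : Type*} [PseudoMetricSpace X]
    [PseudoMetricSpace Y] {f : ℝ → X} {g : ℝ → Y} {a b : ℝ}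
    (hg : AbsolutelyContinuousOnInterval g a b)
    (hfg : ∀ x y, dist (f x) (f y) ≤ dist (g x) (g y)) :
    AbsolutelyContinuousOnInterval f a b :=
  squeeze_zero (fun _ => Finset.sum_nonneg fun _ _ => dist_nonneg)
    (fun _ => Finset.sum_le_sum fun _ _ => hfg _ _) hg

theorem HasDerivAt.norm_le_of_dist_le {E F : Type*} [NormedAddCommGroup E] [NormedSpace ℝ E]
    [NormedAddCommGroup F] [NormedSpace ℝ F] {f : ℝ → E} {g : ℝ → F} {f' : E} {g' : F} {x : ℝ}
    (hf : HasDerivAt f f' x) (hg : HasDerivAt g g' x)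
    (hfg : ∀ y, dist (f y) (f x) ≤ dist (g y) (g x)) : ‖f'‖ ≤ ‖g'‖ := by
  refine le_of_tendsto_of_tendsto' (hasDerivAt_iff_tendsto_slope.1 hf).norm
    (hasDerivAt_iff_tendsto_slope.1 hg).norm fun y => ?_
  simp only [slope, vsub_eq_sub, norm_smul, ← dist_eq_norm]
  exact mul_le_mul_of_nonneg_left (hfg y) (norm_nonneg _)

theorem Function.Periodic.deriv {E : Type*} [NormedAddCommGroup E] [NormedSpace ℝ E]
    {f : ℝ → E} {c : ℝ} (hf : Function.Periodic f c) : Function.Periodic (deriv f) c := fun x => by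
  rw [← deriv_comp_add_const, funext hf]

section NormOfPrimitive

variable {E : Type*} [NormedAddCommGroup E] [NormedSpace ℝ E] {Φ Ψ : ℝ → E}

theorem dist_norm_le_dist_integral_norm (hΦ : ∀ x, Φ x = Φ 0 + ∫ t in (0:ℝ)..x, Ψ t)
    (hΨ : ∀ a b, IntervalIntegrable Ψ volume a b) (c x y : ℝ) :
    dist ‖Φ x‖ ‖Φ y‖ ≤ dist (∫ t in c..x, ‖Ψ t‖) (∫ t in c..y, ‖Ψ t‖) := by
  have hdiff : Φ x - Φ y = ∫ t in y..x, Ψ t := by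
    rw [hΦ x, hΦ y, add_sub_add_left_eq_sub,
      intervalIntegral.integral_interval_sub_left (hΨ 0 x) (hΨ 0 y)]
  calc dist ‖Φ x‖ ‖Φ y‖ ≤ ‖Φ x - Φ y‖ := dist_norm_norm_le _ _
    _ ≤ |∫ t in y..x, ‖Ψ t‖| := hdiff ▸ intervalIntegral.norm_integral_le_abs_integral_norm
    _ = _ := by
      rw [Real.dist_eq, intervalIntegral.integral_interval_sub_left (hΨ c x).norm (hΨ c y).norm]

theorem absolutelyContinuousOnInterval_norm (hΦ : ∀ x, Φ x = Φ 0 + ∫ t in (0:ℝ)..x, Ψ t)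
    (hΨ : ∀ a b, IntervalIntegrable Ψ volume a b) (a b : ℝ) :
    AbsolutelyContinuousOnInterval (fun x => ‖Φ x‖) a b :=
  ((hΨ a b).norm.absolutelyContinuousOnInterval_intervalIntegral left_mem_uIcc).of_dist_le
    (dist_norm_le_dist_integral_norm hΦ hΨ a)

theorem ae_sq_deriv_norm_le (hΦ : ∀ x, Φ x = Φ 0 + ∫ t in (0:ℝ)..x, Ψ t)
    (hΨ : ∀ a b, IntervalIntegrable Ψ volume a b) (a b : ℝ) :
    ∀ᵐ x, x ∈ uIcc a b → deriv (fun x => ‖Φ x‖) x ^ 2 ≤ ‖Ψ x‖ ^ 2 := by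
  filter_upwards [(absolutelyContinuousOnInterval_norm hΦ hΨ a b).ae_differentiableAt,
    (hΨ a b).norm.ae_hasDerivAt_integral] with x hσ hH hx
  have := (hσ hx).hasDerivAt.norm_le_of_dist_le (hH hx a left_mem_uIcc)
    fun y => dist_norm_le_dist_integral_norm hΦ hΨ a y x
  rw [Real.norm_eq_abs, norm_norm] at this
  exact sq_le_sq' (abs_le.1 this).1 (abs_le.1 this).2

theorem intervalIntegrable_sq_deriv_norm (hΦ : ∀ x, Φ x = Φ 0 + ∫ t in (0:ℝ)..x, Ψ t)
    (hΨ : ∀ a b, IntervalIntegrable Ψ volume a b) {a b : ℝ}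
    (hΨ2 : IntervalIntegrable (fun t => ‖Ψ t‖ ^ 2) volume a b) :
    IntervalIntegrable (fun x => deriv (fun x => ‖Φ x‖) x ^ 2) volume a b := by
  refine hΨ2.mono_fun' ((measurable_deriv _).pow_const 2).aestronglyMeasurable ?_
  rw [EventuallyLE, ae_restrict_iff' measurableSet_uIoc]
  filter_upwards [ae_sq_deriv_norm_le hΦ hΨ a b] with x hx hxab
  rw [Real.norm_of_nonneg (sq_nonneg _)]
  exact hx (uIoc_subset_uIcc hxab)

theorem integral_sq_deriv_norm_le (hΦ : ∀ x, Φ x = Φ 0 + ∫ t in (0:ℝ)..x, Ψ t)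
    (hΨ : ∀ a b, IntervalIntegrable Ψ volume a b) {a b : ℝ} (hab : a ≤ b)
    (hΨ2 : IntervalIntegrable (fun t => ‖Ψ t‖ ^ 2) volume a b) :
    ∫ x in a..b, deriv (fun x => ‖Φ x‖) x ^ 2 ≤ ∫ x in a..b, ‖Ψ x‖ ^ 2 := by
  refine intervalIntegral.integral_mono_ae_restrict hab
    (intervalIntegrable_sq_deriv_norm hΦ hΨ hΨ2) hΨ2 ?_
  rw [EventuallyLE, ae_restrict_iff' measurableSet_Icc]
  filter_upwards [ae_sq_deriv_norm_le hΦ hΨ a b] with x hx hxab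
  exact hx (Icc_subset_uIcc hxab)

theorem isSqrtDensity_norm (hper : Function.Periodic Φ (2 * π))
    (hΦ : ∀ x, Φ x = Φ 0 + ∫ t in (0:ℝ)..x, Ψ t) (hΨ : ∀ a b, IntervalIntegrable Ψ volume a b)
    (hΨ2 : IntervalIntegrable (fun t => ‖Ψ t‖ ^ 2) volume 0 (2 * π)) :
    IsSqrtDensity
      ((volume.restrict (Ioc 0 (2 * π))).withDensity fun x => ENNReal.ofReal (‖Φ x‖ ^ 2))
      (fun x => ‖Φ x‖) (deriv fun x => ‖Φ x‖) := by
  have hnorm : Function.Periodic (fun x => ‖Φ x‖) (2 * π) := fun x => by simp only [hper x]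
  refine ⟨hnorm, hnorm.deriv, fun _ => norm_nonneg _, fun x => ?_,
    (absolutelyContinuousOnInterval_norm hΦ hΨ 0 _).intervalIntegrable_deriv,
    intervalIntegrable_sq_deriv_norm hΦ hΨ hΨ2, rfl⟩
  rw [(absolutelyContinuousOnInterval_norm hΦ hΨ 0 x).integral_deriv_eq_sub, add_sub_cancel]

end NormOfPrimitive

theorem ofReal_smul_withDensity_add_ofReal_smul_withDensity {α : Type*} [MeasurableSpace α]
    (m : Measure α) {a b : ℝ} {f g : α → ℝ} (ha : 0 ≤ a) (hb : 0 ≤ b) (hf : ∀ x, 0 ≤ f x)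
    (hg : ∀ x, 0 ≤ g x) (hfm : Measurable f) :
    ENNReal.ofReal a • m.withDensity (fun x => ENNReal.ofReal (f x)) +
        ENNReal.ofReal b • m.withDensity (fun x => ENNReal.ofReal (g x)) =
      m.withDensity fun x => ENNReal.ofReal (a * f x + b * g x) := by
  rw [← withDensity_smul' _ _ ofReal_ne_top, ← withDensity_smul' _ _ ofReal_ne_top,
    ← withDensity_add_left (hfm.ennreal_ofReal.const_smul _)]
  congr 1 with x
  simp only [Pi.add_apply, Pi.smul_apply, smul_eq_mul]
  rw [← ENNReal.ofReal_mul ha, ← ENNReal.ofReal_mul hb,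
    ← ENNReal.ofReal_add (mul_nonneg ha (hf x)) (mul_nonneg hb (hg x))]

theorem ENNReal.le_mul_sInf_add_mul_sInf {x a b : ℝ≥0∞} {S T : Set ℝ≥0∞} (ha₀ : a ≠ 0)
    (ha : a ≠ ∞) (hb₀ : b ≠ 0) (hb : b ≠ ∞) (h : ∀ s ∈ S, ∀ t ∈ T, x ≤ a * s + b * t) :
    x ≤ a * sInf S + b * sInf T := by
  rw [sInf_eq_iInf', sInf_eq_iInf', ENNReal.mul_iInf_of_ne ha₀ ha, ENNReal.mul_iInf_of_ne hb₀ hb,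
    ENNReal.iInf_add]
  refine le_iInf fun s => ?_
  rw [ENNReal.add_iInf]
  exact le_iInf fun t => h s s.2 t t.2

theorem IntervalIntegrable.ofReal {𝕜 : Type*} [RCLike 𝕜] {f : ℝ → ℝ} {a b : ℝ}
    (hf : IntervalIntegrable f volume a b) : IntervalIntegrable (fun t => (f t : 𝕜)) volume a b :=
  ⟨hf.1.ofReal, hf.2.ofReal⟩

noncomputable def weightedPair (lam u v : ℝ) : ℂ :=
  ((√lam * u : ℝ) : ℂ) + ((√(1 - lam) * v : ℝ) : ℂ) * Complex.I

section WeightedPair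

variable {lam : ℝ}

theorem sq_norm_weightedPair (h0 : 0 ≤ lam) (h1 : lam ≤ 1) (u v : ℝ) :
    ‖weightedPair lam u v‖ ^ 2 = lam * u ^ 2 + (1 - lam) * v ^ 2 := by
  rw [weightedPair, Complex.norm_add_mul_I, sq_sqrt (by positivity), mul_pow, mul_pow,
    sq_sqrt h0, sq_sqrt (by linarith)]

theorem weightedPair_add (u v u' v' : ℝ) :
    weightedPair lam (u + u') (v + v') = weightedPair lam u v + weightedPair lam u' v' := by
  simp only [weightedPair]; push_cast; ring

theorem IntervalIntegrable.weightedPair {f g : ℝ → ℝ} {a b : ℝ}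
    (hf : IntervalIntegrable f volume a b) (hg : IntervalIntegrable g volume a b) :
    IntervalIntegrable (fun t => weightedPair lam (f t) (g t)) volume a b :=
  (hf.const_mul √lam).ofReal.add ((hg.const_mul √(1 - lam)).ofReal.mul_const _)

theorem intervalIntegral_weightedPair {f g : ℝ → ℝ} {a b : ℝ}
    (hf : IntervalIntegrable f volume a b) (hg : IntervalIntegrable g volume a b) :
    ∫ t in a..b, weightedPair lam (f t) (g t) =
      weightedPair lam (∫ t in a..b, f t) (∫ t in a..b, g t) := by
  simp only [weightedPair]
  rw [intervalIntegral.integral_add (hf.const_mul √lam).ofReal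
      ((hg.const_mul √(1 - lam)).ofReal.mul_const _),
    intervalIntegral.integral_mul_const, intervalIntegral.integral_ofReal,
    intervalIntegral.integral_ofReal, intervalIntegral.integral_const_mul,
    intervalIntegral.integral_const_mul]

theorem weightedPair_eq_add_integral {f g f' g' : ℝ → ℝ}
    (hf : ∀ x, f x = f 0 + ∫ t in (0:ℝ)..x, f' t) (hg : ∀ x, g x = g 0 + ∫ t in (0:ℝ)..x, g' t)
    (hf' : ∀ a b, IntervalIntegrable f' volume a b) (hg' : ∀ a b, IntervalIntegrable g' volume a b)
    (x : ℝ) :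
    weightedPair lam (f x) (g x) =
      weightedPair lam (f 0) (g 0) + ∫ t in (0:ℝ)..x, weightedPair lam (f' t) (g' t) := by
  rw [intervalIntegral_weightedPair (hf' 0 x) (hg' 0 x), ← weightedPair_add, ← hf, ← hg]

end WeightedPair

theorem IsSqrtDensity.continuous {μ : Measure ℝ} {φ ψ : ℝ → ℝ} (h : IsSqrtDensity μ φ ψ) :
    Continuous φ := by
  obtain ⟨-, hper, -, hφ, hψ, -⟩ := h
  rw [funext hφ]
  exact continuous_const.add
    (intervalIntegral.continuous_primitive (hper.intervalIntegrable₀ two_pi_pos.ne' hψ) 0)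

theorem IsSqrtDensity.exists_smul_add_smul {μ ν : Measure ℝ} {φ ψ χ ω : ℝ → ℝ} {lam : ℝ}
    (h0 : 0 ≤ lam) (h1 : lam ≤ 1) (hμ : IsSqrtDensity μ φ ψ) (hν : IsSqrtDensity ν χ ω) :
    ∃ σ τ : ℝ → ℝ, IsSqrtDensity (ENNReal.ofReal lam • μ + ENNReal.ofReal (1 - lam) • ν) σ τ ∧
      ∫ x in (0:ℝ)..2 * π, τ x ^ 2 ≤
        lam * (∫ x in (0:ℝ)..2 * π, ψ x ^ 2) + (1 - lam) * ∫ x in (0:ℝ)..2 * π, ω x ^ 2 := by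
  have hφc := hμ.continuous
  obtain ⟨hpφ, hpψ, -, hφ, hψ, hψ2, rfl⟩ := hμ
  obtain ⟨hpχ, hpω, -, hχ, hω, hω2, rfl⟩ := hν
  have hψ' := hpψ.intervalIntegrable₀ two_pi_pos.ne' hψ
  have hω' := hpω.intervalIntegrable₀ two_pi_pos.ne' hω
  set Φ := fun x => weightedPair lam (φ x) (χ x)
  set Ψ := fun t => weightedPair lam (ψ t) (ω t)
  have hΨ : ∀ a b, IntervalIntegrable Ψ volume a b := fun a b => (hψ' a b).weightedPair (hω' a b)
  have hΦ : ∀ x, Φ x = Φ 0 + ∫ t in (0:ℝ)..x, Ψ t :=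
    weightedPair_eq_add_integral hφ hχ hψ' hω'
  have hΦper : Function.Periodic Φ (2 * π) := fun x => by simp only [Φ, hpφ x, hpχ x]
  have hΨ_sq : ∀ t, ‖Ψ t‖ ^ 2 = lam * ψ t ^ 2 + (1 - lam) * ω t ^ 2 := fun t =>
    sq_norm_weightedPair h0 h1 _ _
  have hΨ2 : IntervalIntegrable (fun t => ‖Ψ t‖ ^ 2) volume 0 (2 * π) := by
    simp_rw [hΨ_sq]
    exact (hψ2.const_mul _).add (hω2.const_mul _)
  refine ⟨fun x => ‖Φ x‖, deriv fun x => ‖Φ x‖, ?_,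
    (integral_sq_deriv_norm_le hΦ hΨ two_pi_pos.le hΨ2).trans_eq ?_⟩
  · convert isSqrtDensity_norm hΦper hΦ hΨ hΨ2 using 1
    rw [ofReal_smul_withDensity_add_ofReal_smul_withDensity _ h0 (sub_nonneg.2 h1)
      (fun _ => sq_nonneg _) (fun _ => sq_nonneg _) (hφc.pow 2).measurable]
    simp_rw [Φ, sq_norm_weightedPair h0 h1]
  · simp_rw [hΨ_sq]
    rw [intervalIntegral.integral_add (hψ2.const_mul _) (hω2.const_mul _),
      intervalIntegral.integral_const_mul, intervalIntegral.integral_const_mul]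

theorem rateI_convex_general (μ ν : Measure ℝ) (lam : ℝ) (h0 : 0 ≤ lam) (h1 : lam ≤ 1) :
    rateI (ENNReal.ofReal lam • μ + ENNReal.ofReal (1 - lam) • ν) ≤
      ENNReal.ofReal lam * rateI μ + ENNReal.ofReal (1 - lam) * rateI ν := by
  -- `0 * ⊤ = 0` in `ℝ≥0∞`, so the endpoints are not covered by the infimum argument.
  rcases h0.eq_or_lt with rfl | hl0
  · simp
  rcases h1.eq_or_lt with rfl | hl1
  · simp
  refine ENNReal.le_mul_sInf_add_mul_sInf (by simpa) ofReal_ne_top (by simpa) ofReal_ne_top ?_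
  rintro _ ⟨φ, ψ, hφ, rfl⟩ _ ⟨χ, ω, hχ, rfl⟩
  obtain ⟨σ, τ, hσ, hle⟩ := hφ.exists_smul_add_smul h0 h1 hχ
  have hψ2 : 0 ≤ ∫ x in (0:ℝ)..2 * π, ψ x ^ 2 :=
    intervalIntegral.integral_nonneg two_pi_pos.le fun _ _ => sq_nonneg _
  have hω2 : 0 ≤ ∫ x in (0:ℝ)..2 * π, ω x ^ 2 :=
    intervalIntegral.integral_nonneg two_pi_pos.le fun _ _ => sq_nonneg _
  calc rateI (ENNReal.ofReal lam • μ + ENNReal.ofReal (1 - lam) • ν)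
      ≤ ENNReal.ofReal (1 / 2 * ∫ x in (0:ℝ)..2 * π, τ x ^ 2) := sInf_le ⟨σ, τ, hσ, rfl⟩
    _ ≤ ENNReal.ofReal (lam * (1 / 2 * ∫ x in (0:ℝ)..2 * π, ψ x ^ 2) +
          (1 - lam) * (1 / 2 * ∫ x in (0:ℝ)..2 * π, ω x ^ 2)) :=
        ENNReal.ofReal_le_ofReal (by linear_combination hle / 2)
    _ = _ := by
        rw [ENNReal.ofReal_add (by positivity) (mul_nonneg (sub_nonneg.2 h1) (by positivity)),
          ENNReal.ofReal_mul h0, ENNReal.ofReal_mul (sub_nonneg.2 h1)]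

/-- The rate function `I` is convex on probability measures on the circle. -/
theorem rateI_convex (μ ν : Measure ℝ) (hμ : IsProbabilityMeasure μ)
    (hν : IsProbabilityMeasure ν) (lam : ℝ) (h0 : 0 ≤ lam) (h1 : lam ≤ 1) :
    rateI (ENNReal.ofReal lam • μ + ENNReal.ofReal (1 - lam) • ν) ≤
      ENNReal.ofReal lam * rateI μ + ENNReal.ofReal (1 - lam) * rateI ν :=
  rateI_convex_general μ ν lam h0 h1
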